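/- arXiv:2011.13697 — 2 statements merged into one kernel-verified Lean document; each statement's English description precedes it below -/
import Mathlib

section
/- With the notation of bell functions: if I=[α_I,α_I') and J=[α_J,α_J') are adjacent intervals with α_I'=α_J, compatible cutoffs (ε_I' = ε_J), and b_I, b_J are the corresponding bell functions built from a common ramp ρ, then b_I(ξ)² + b_J(ξ)² = 1 for all ξ ∈ [α_I+ε_I, α_J'-ε_J']. -/
theorem bell_partition_of_unity (ρ : ℝ → ℝ)
    (hsmooth : ContDiff ℝ (⊤ : ℕ∞) ρ)
    (h0 : ∀ ξ : ℝ, ξ ≤ -1 → ρ ξ = 0)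
    (h1 : ∀ ξ : ℝ, 1 ≤ ξ → ρ ξ = 1)
    (hpart : ∀ ξ : ℝ, ρ ξ ^ 2 + ρ (-ξ) ^ 2 = 1)
    (αI αI' αJ αJ' εI εI' εJ εJ' : ℝ)
    (hI : αI < αI') (hJ : αJ < αJ')
    (hadj : αI' = αJ)
    (hεI : 0 < εI) (hεI' : 0 < εI') (hεJ : 0 < εJ) (hεJ' : 0 < εJ')
    (hcompat : εI' = εJ)
    (hsumI : εI + εI' ≤ αI' - αI)
    (hsumJ : εJ + εJ' ≤ αJ' - αJ)
    (bI bJ : ℝ → ℝ)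
    (hbI : ∀ ξ : ℝ, bI ξ = ρ ((ξ - αI) / εI) * ρ ((αI' - ξ) / εI'))
    (hbJ : ∀ ξ : ℝ, bJ ξ = ρ ((ξ - αJ) / εJ) * ρ ((αJ' - ξ) / εJ')) :
    ∀ ξ ∈ Set.Icc (αI + εI) (αJ' - εJ'), bI ξ ^ 2 + bJ ξ ^ 2 = 1 := by
  intro ξ hξ
  obtain ⟨hl, hr⟩ := hξ
  have h1a : ρ ((ξ - αI) / εI) = 1 := by
    apply h1
    rw [le_div_iff₀ hεI]
    linarith
  have h1b : ρ ((αJ' - ξ) / εJ') = 1 := by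
    apply h1
    rw [le_div_iff₀ hεJ']
    linarith
  have hneg : (αI' - ξ) / εI' = -((ξ - αJ) / εJ) := by
    rw [hadj, hcompat]
    ring
  rw [hbI, hbJ, h1a, h1b, one_mul, mul_one, hneg, add_comm]
  exact hpart _
end

section
/- Let 0 < r ≤ 1, N > 2/r, and let g : ℝ² → [0,∞) satisfy g(x) ≤ (1+|x|)^{-N}. Let δ be an invertible positive diagonal 2×2 matrix with both entries comparable to t > 0 (i.e. c₀t ≤ δ_{ii} ≤ c₁t), and let {s_n}_{n∈ℕ₀²} be nonnegative numbers. Then there is a constant C depending only on r, N, c₀, c₁ such that for all x ∈ ℝ²: Σ_{n∈ℕ₀²} s_n · g(δx - π(n+a)) ≤ C · M_r(Σ_{n∈ℕ₀²} s_n χ_{U(n)})(x), where U(n) = {y : δy - π(n+a) ∈ B(0,1)}, a=(1/2,1/2), and M_r u(x) = sup_{t>0} ( |B(x,t)|^{-1} ∫_{B(x,t)} |u|^r )^{1/r} is the Hardy–Littlewood maximal function of order r. -/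
open Real MeasureTheory

/-- The set `U(n) = { y : δ y - π(n+a) ∈ B(0,1) }` for `δ = diag(d₁,d₂)`,
`a = (1/2,1/2)`, with the Euclidean unit ball in `ℝ²`. -/
def Uset (d₁ d₂ : ℝ) (n : ℕ × ℕ) : Set (ℝ × ℝ) :=
  {y | Real.sqrt ((d₁ * y.1 - Real.pi * ((n.1 : ℝ) + 1 / 2)) ^ 2 +
        (d₂ * y.2 - Real.pi * ((n.2 : ℝ) + 1 / 2)) ^ 2) < 1}

/-- The Euclidean ball of radius `t` centered at `x` in `ℝ²` (as `ℝ × ℝ`). -/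
def ball2 (x : ℝ × ℝ) (t : ℝ) : Set (ℝ × ℝ) :=
  {y | Real.sqrt ((y.1 - x.1) ^ 2 + (y.2 - x.2) ^ 2) < t}

/-- The Hardy–Littlewood maximal function of order `r` (Euclidean balls in `ℝ²`). -/
noncomputable def maxFn (r : ℝ) (u : ℝ × ℝ → ℝ) (x : ℝ × ℝ) : ℝ :=
  ⨆ t : Set.Ioi (0 : ℝ),
    (((volume (ball2 x t)).toReal)⁻¹ * ∫ y in ball2 x t, |u y| ^ r) ^ (1 / r)


lemma abs_lt_of_sq_add_sq_lt {a b c : ℝ} (h : Real.sqrt (a^2 + b^2) < c) :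
    |a| < c ∧ |b| < c := by
  have hc : 0 < c := lt_of_le_of_lt (Real.sqrt_nonneg _) h
  have h2 : a^2 + b^2 < c^2 := (Real.sqrt_lt' hc).1 h
  constructor <;> [skip; skip] <;>
    · rw [← Real.sqrt_sq_eq_abs]
      refine (Real.sqrt_lt' hc).2 (by nlinarith)

lemma mem_Uset_abs {d₁ d₂ : ℝ} {n : ℕ × ℕ} {y : ℝ × ℝ} (h : y ∈ Uset d₁ d₂ n) :
    |d₁ * y.1 - Real.pi * ((n.1 : ℝ) + 1 / 2)| < 1 ∧
    |d₂ * y.2 - Real.pi * ((n.2 : ℝ) + 1 / 2)| < 1 :=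
  abs_lt_of_sq_add_sq_lt h

lemma Uset_disjoint (d₁ d₂ : ℝ) {n m : ℕ × ℕ} (hnm : n ≠ m) :
    Disjoint (Uset d₁ d₂ n) (Uset d₁ d₂ m) := by
  rw [Set.disjoint_left]
  intro y hn hm
  obtain ⟨h1n, h2n⟩ := mem_Uset_abs hn
  obtain ⟨h1m, h2m⟩ := mem_Uset_abs hm
  apply hnm
  have hpi := Real.pi_gt_three
  have key : ∀ a b : ℕ, ∀ z : ℝ, |z - Real.pi * ((a:ℝ)+1/2)| < 1 →
      |z - Real.pi * ((b:ℝ)+1/2)| < 1 → a = b := by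
    intro a b z ha hb
    by_contra hab
    have : (1:ℝ) ≤ |(a:ℝ) - b| := by
      rcases Nat.lt_or_ge a b with h | h
      · have h2 : (a:ℝ) + 1 ≤ b := by exact_mod_cast h
        rw [abs_sub_comm, abs_of_pos (by linarith)]; linarith
      · have h3 : b < a := lt_of_le_of_ne h (fun e => hab e.symm)
        have h2 : (b:ℝ) + 1 ≤ a := by exact_mod_cast h3
        rw [abs_of_pos (by linarith)]; linarith
    have habs : |Real.pi * ((a:ℝ)+1/2) - Real.pi * ((b:ℝ)+1/2)| < 2 := by
      calc |Real.pi * ((a:ℝ)+1/2) - Real.pi * ((b:ℝ)+1/2)|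
          ≤ |Real.pi * ((a:ℝ)+1/2) - z| + |z - Real.pi * ((b:ℝ)+1/2)| := abs_sub_le _ _ _
        _ < 2 := by rw [abs_sub_comm] at ha; linarith
    have : Real.pi * |(a:ℝ) - b| < 2 := by
      have : Real.pi * ((a:ℝ)+1/2) - Real.pi * ((b:ℝ)+1/2) = Real.pi * ((a:ℝ) - b) := by ring
      rw [this, abs_mul, abs_of_pos Real.pi_pos] at habs
      exact habs
    nlinarith
  exact Prod.ext (key n.1 m.1 _ h1n h1m) (key n.2 m.2 _ h2n h2m)

lemma measurableSet_Uset (d₁ d₂ : ℝ) (n : ℕ × ℕ) : MeasurableSet (Uset d₁ d₂ n) := by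
  apply IsOpen.measurableSet
  apply isOpen_lt _ continuous_const
  fun_prop

lemma measurableSet_ball2 (x : ℝ × ℝ) (ρ : ℝ) : MeasurableSet (ball2 x ρ) := by
  apply IsOpen.measurableSet
  apply isOpen_lt _ continuous_const
  fun_prop

lemma ball2_subset_square (x : ℝ × ℝ) (ρ : ℝ) :
    ball2 x ρ ⊆ Set.Ioo (x.1-ρ) (x.1+ρ) ×ˢ Set.Ioo (x.2-ρ) (x.2+ρ) := by
  intro y hy
  obtain ⟨h1, h2⟩ := abs_lt_of_sq_add_sq_lt hy
  rw [abs_lt] at h1 h2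
  simp only [Set.mem_prod, Set.mem_Ioo]
  refine ⟨⟨?_, ?_⟩, ?_, ?_⟩ <;> linarith [h1.1, h1.2, h2.1, h2.2]

lemma volume_ball2_lt_top (x : ℝ × ℝ) (ρ : ℝ) : volume (ball2 x ρ) < ⊤ := by
  calc volume (ball2 x ρ) ≤ volume (Set.Ioo (x.1-ρ) (x.1+ρ) ×ˢ Set.Ioo (x.2-ρ) (x.2+ρ)) :=
        measure_mono (ball2_subset_square x ρ)
    _ < ⊤ := by
        rw [MeasureTheory.Measure.volume_eq_prod, Measure.prod_prod, Real.volume_Ioo,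
          Real.volume_Ioo]
        finiteness

lemma volume_ball2_toReal_le (x : ℝ × ℝ) (ρ : ℝ) (hρ : 0 < ρ) :
    (volume (ball2 x ρ)).toReal ≤ 4 * ρ^2 := by
  have h := measure_mono (μ := (volume : Measure (ℝ × ℝ))) (ball2_subset_square x ρ)
  rw [MeasureTheory.Measure.volume_eq_prod, Measure.prod_prod, Real.volume_Ioo, Real.volume_Ioo] at h
  have := ENNReal.toReal_mono (by finiteness) h
  rw [ENNReal.toReal_mul, ENNReal.toReal_ofReal (by linarith), ENNReal.toReal_ofReal (by linarith)] at this
  calc (volume (ball2 x ρ)).toReal ≤ (x.1+ρ-(x.1-ρ)) * (x.2+ρ-(x.2-ρ)) := this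
    _ = 4 * ρ^2 := by ring

lemma square_subset_ball2 (x : ℝ × ℝ) (ρ : ℝ) (hρ : 0 < ρ) :
    Set.Ioo (x.1-ρ/2) (x.1+ρ/2) ×ˢ Set.Ioo (x.2-ρ/2) (x.2+ρ/2) ⊆ ball2 x ρ := by
  rintro y ⟨⟨ha1, ha2⟩, ⟨hb1, hb2⟩⟩
  show Real.sqrt _ < ρ
  apply (Real.sqrt_lt' hρ).2
  nlinarith

lemma volume_ball2_pos (x : ℝ × ℝ) (ρ : ℝ) (hρ : 0 < ρ) :
    0 < (volume (ball2 x ρ)).toReal := by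
  rw [ENNReal.toReal_pos_iff]
  refine ⟨lt_of_lt_of_le ?_ (measure_mono (square_subset_ball2 x ρ hρ)), volume_ball2_lt_top x ρ⟩
  rw [MeasureTheory.Measure.volume_eq_prod, Measure.prod_prod, Real.volume_Ioo, Real.volume_Ioo]
  apply ENNReal.mul_pos <;>
    · simp only [ne_eq, ENNReal.ofReal_eq_zero, not_le]
      linarith

lemma Uset_subset_square {d₁ d₂ : ℝ} (hd₁ : 0 < d₁) (hd₂ : 0 < d₂) (n : ℕ × ℕ) :
    Uset d₁ d₂ n ⊆ Set.Ioo ((Real.pi * ((n.1:ℝ)+1/2) - 1)/d₁) ((Real.pi * ((n.1:ℝ)+1/2) + 1)/d₁) ×ˢ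
      Set.Ioo ((Real.pi * ((n.2:ℝ)+1/2) - 1)/d₂) ((Real.pi * ((n.2:ℝ)+1/2) + 1)/d₂) := by
  intro y hy
  obtain ⟨h1, h2⟩ := mem_Uset_abs hy
  rw [abs_lt] at h1 h2
  simp only [Set.mem_prod, Set.mem_Ioo]
  refine ⟨⟨?_, ?_⟩, ?_, ?_⟩
  · rw [div_lt_iff₀ hd₁]; nlinarith [h1.1]
  · rw [lt_div_iff₀ hd₁]; nlinarith [h1.2]
  · rw [div_lt_iff₀ hd₂]; nlinarith [h2.1]
  · rw [lt_div_iff₀ hd₂]; nlinarith [h2.2]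

lemma volume_Uset_lt_top {d₁ d₂ : ℝ} (hd₁ : 0 < d₁) (hd₂ : 0 < d₂) (n : ℕ × ℕ) :
    volume (Uset d₁ d₂ n) < ⊤ := by
  calc volume (Uset d₁ d₂ n) ≤ _ := measure_mono (Uset_subset_square hd₁ hd₂ n)
    _ < ⊤ := by
        rw [MeasureTheory.Measure.volume_eq_prod, Measure.prod_prod, Real.volume_Ioo,
          Real.volume_Ioo]
        finiteness

lemma square_subset_Uset {d₁ d₂ : ℝ} (hd₁ : 0 < d₁) (hd₂ : 0 < d₂) (n : ℕ × ℕ) :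
    Set.Ioo ((Real.pi * ((n.1:ℝ)+1/2) - 7/10)/d₁) ((Real.pi * ((n.1:ℝ)+1/2) + 7/10)/d₁) ×ˢ
      Set.Ioo ((Real.pi * ((n.2:ℝ)+1/2) - 7/10)/d₂) ((Real.pi * ((n.2:ℝ)+1/2) + 7/10)/d₂) ⊆
      Uset d₁ d₂ n := by
  rintro y ⟨⟨ha1, ha2⟩, ⟨hb1, hb2⟩⟩
  rw [lt_div_iff₀ hd₁] at ha2
  rw [div_lt_iff₀ hd₁] at ha1
  rw [lt_div_iff₀ hd₂] at hb2
  rw [div_lt_iff₀ hd₂] at hb1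
  show Real.sqrt _ < 1
  apply (Real.sqrt_lt' one_pos).2
  nlinarith

lemma volume_Uset_toReal_ge {d₁ d₂ : ℝ} (hd₁ : 0 < d₁) (hd₂ : 0 < d₂) (n : ℕ × ℕ) :
    1 / (d₁ * d₂) ≤ (volume (Uset d₁ d₂ n)).toReal := by
  have h := measure_mono (μ := (volume : Measure (ℝ × ℝ))) (square_subset_Uset hd₁ hd₂ n)
  rw [MeasureTheory.Measure.volume_eq_prod, Measure.prod_prod, Real.volume_Ioo,
    Real.volume_Ioo] at h
  have h2 := ENNReal.toReal_mono (volume_Uset_lt_top hd₁ hd₂ n).ne h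
  have e1 : (Real.pi * ((n.1:ℝ)+1/2) + 7/10)/d₁ - (Real.pi * ((n.1:ℝ)+1/2) - 7/10)/d₁
      = 7/5/d₁ := by field_simp; ring
  have e2 : (Real.pi * ((n.2:ℝ)+1/2) + 7/10)/d₂ - (Real.pi * ((n.2:ℝ)+1/2) - 7/10)/d₂
      = 7/5/d₂ := by field_simp; ring
  rw [ENNReal.toReal_mul, e1, e2, ENNReal.toReal_ofReal (by positivity),
    ENNReal.toReal_ofReal (by positivity)] at h2
  calc 1 / (d₁ * d₂) ≤ 7/5/d₁ * (7/5/d₂) := by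
        rw [div_mul_div_comm]
        gcongr
        norm_num
    _ ≤ _ := h2

set_option maxHeartbeats 1000000 in
lemma Uset_subset_ball2 {d₁ d₂ K e : ℝ} {x : ℝ × ℝ} {n : ℕ × ℕ}
    (hd₁ : 0 < d₁) (hd₂ : 0 < d₂) (he₁ : e ≤ d₁) (he₂ : e ≤ d₂) (he : 0 < e)
    (hD : Real.sqrt ((d₁ * x.1 - Real.pi * ((n.1 : ℝ) + 1 / 2)) ^ 2 +
        (d₂ * x.2 - Real.pi * ((n.2 : ℝ) + 1 / 2)) ^ 2) ≤ K) :
    Uset d₁ d₂ n ⊆ ball2 x (2 * (K + 1) / e) := by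
  intro y hy
  obtain ⟨h1, h2⟩ := mem_Uset_abs hy
  have hK : 0 ≤ K := le_trans (Real.sqrt_nonneg _) hD
  have hx1 : |d₁ * x.1 - Real.pi * ((n.1 : ℝ) + 1 / 2)| ≤ K := by
    rw [← Real.sqrt_sq_eq_abs]
    exact le_trans (Real.sqrt_le_sqrt
      (by nlinarith [sq_nonneg (d₂ * x.2 - Real.pi * ((n.2 : ℝ) + 1 / 2))])) hD
  have hx2 : |d₂ * x.2 - Real.pi * ((n.2 : ℝ) + 1 / 2)| ≤ K := by
    rw [← Real.sqrt_sq_eq_abs]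
    exact le_trans (Real.sqrt_le_sqrt
      (by nlinarith [sq_nonneg (d₁ * x.1 - Real.pi * ((n.1 : ℝ) + 1 / 2))])) hD
  rw [abs_lt] at h1 h2
  rw [abs_le] at hx1 hx2
  set q : ℝ := (K + 1) / e with hq
  have hqpos : 0 < q := by positivity
  have key : ∀ a b : ℝ, e ≤ a → -(K+1) < a * b → a * b < K + 1 → -q < b ∧ b < q := by
    intro a b hea hlo hhi
    have ha : 0 < a := lt_of_lt_of_le he hea
    constructor
    · rw [neg_lt, hq, lt_div_iff₀ he]
      rcases le_or_gt 0 b with hb | hb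
      · have hbe : -b * e ≤ 0 := mul_nonpos_iff.2 (Or.inr ⟨by linarith, he.le⟩)
        linarith
      · have h3 : -b * e ≤ -b * a := mul_le_mul_of_nonneg_left hea (by linarith)
        have h4 : -b * a = -(a * b) := by ring
        linarith
    · rw [hq, lt_div_iff₀ he]
      rcases le_or_gt 0 b with hb | hb
      · have h3 : b * e ≤ b * a := mul_le_mul_of_nonneg_left hea hb
        have h4 : b * a = a * b := by ring
        linarith
      · have hbe : b * e ≤ 0 := mul_nonpos_iff.2 (Or.inr ⟨hb.le, he.le⟩)
        linarith
  have e1 : d₁ * (y.1 - x.1) = (d₁ * y.1 - Real.pi * ((n.1 : ℝ) + 1 / 2)) -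
      (d₁ * x.1 - Real.pi * ((n.1 : ℝ) + 1 / 2)) := by ring
  have e2 : d₂ * (y.2 - x.2) = (d₂ * y.2 - Real.pi * ((n.2 : ℝ) + 1 / 2)) -
      (d₂ * x.2 - Real.pi * ((n.2 : ℝ) + 1 / 2)) := by ring
  have k1 : -q < y.1 - x.1 ∧ y.1 - x.1 < q := by
    refine key d₁ (y.1 - x.1) he₁ ?_ ?_ <;> rw [e1] <;> linarith [h1.1, h1.2, hx1.1, hx1.2]
  have k2 : -q < y.2 - x.2 ∧ y.2 - x.2 < q := by
    refine key d₂ (y.2 - x.2) he₂ ?_ ?_ <;> rw [e2] <;> linarith [h2.1, h2.2, hx2.1, hx2.2]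
  show Real.sqrt _ < 2 * (K + 1) / e
  have hrad : (0:ℝ) < 2 * (K + 1) / e := by positivity
  apply (Real.sqrt_lt' hrad).2
  have he' : 2 * (K + 1) / e = 2 * q := by rw [hq]; ring
  rw [he']
  have p1 : 0 < (q - (y.1 - x.1)) * ((y.1 - x.1) + q) :=
    mul_pos (by linarith [k1.2]) (by linarith [k1.1])
  have p2 : 0 < (q - (y.2 - x.2)) * ((y.2 - x.2) + q) :=
    mul_pos (by linarith [k2.2]) (by linarith [k2.1])
  nlinarith [p1, p2, sq_nonneg q]

lemma myrpow_add (a b r : ℝ) (ha : 0 ≤ a) (hb : 0 ≤ b) (h0 : 0 ≤ r) (h1 : r ≤ 1) :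
    (a+b)^r ≤ a^r + b^r := by
  have h := NNReal.rpow_add_le_add_rpow a.toNNReal b.toNNReal h0 h1
  have := NNReal.coe_le_coe.2 h
  push_cast at this
  rwa [Real.coe_toNNReal a ha, Real.coe_toNNReal b hb] at this
lemma sum_rpow_ge {ι : Type*} (F : Finset ι) (f : ι → ℝ) (r : ℝ) (h0 : 0 < r) (h1 : r ≤ 1)
    (hf : ∀ i ∈ F, 0 ≤ f i) : (∑ i ∈ F, f i) ^ r ≤ ∑ i ∈ F, f i ^ r := by
  classical
  induction F using Finset.induction_on with
  | empty => simp [Real.zero_rpow h0.ne']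
  | @insert a F' hnot ih =>
    rw [Finset.sum_insert hnot, Finset.sum_insert hnot]
    have h1' : (f a + ∑ i ∈ F', f i) ^ r ≤ f a ^ r + (∑ i ∈ F', f i) ^ r :=
      myrpow_add _ _ r (hf a (Finset.mem_insert_self a F'))
        (Finset.sum_nonneg fun i hi => hf i (Finset.mem_insert_of_mem hi)) h0.le h1
    have h2' := ih fun i hi => hf i (Finset.mem_insert_of_mem hi)
    linarith

set_option maxHeartbeats 2000000
theorem maximal_domination (r N c₀ c₁ : ℝ)
    (hr0 : 0 < r) (hr1 : r ≤ 1) (hN : 2 / r < N) (hc₀ : 0 < c₀) (hc : c₀ ≤ c₁) :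
    ∃ C : ℝ, 0 < C ∧
      ∀ (g : ℝ × ℝ → ℝ), (∀ x, 0 ≤ g x) →
        (∀ x : ℝ × ℝ, g x ≤ (1 + Real.sqrt (x.1 ^ 2 + x.2 ^ 2)) ^ (-N)) →
      ∀ (t d₁ d₂ : ℝ), 0 < t → c₀ * t ≤ d₁ → d₁ ≤ c₁ * t → c₀ * t ≤ d₂ → d₂ ≤ c₁ * t →
      ∀ (s : ℕ × ℕ → ℝ), (∀ n, 0 ≤ s n) → (Function.support s).Finite →
      ∀ x : ℝ × ℝ,
        (∑' n : ℕ × ℕ, s n *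
            g (d₁ * x.1 - Real.pi * ((n.1 : ℝ) + 1 / 2),
               d₂ * x.2 - Real.pi * ((n.2 : ℝ) + 1 / 2))) ≤
          C * maxFn r
            (fun y => ∑' n : ℕ × ℕ, Set.indicator (Uset d₁ d₂ n) (fun _ => s n) y) x := by
  classical
  have hc₁ : 0 < c₁ := lt_of_lt_of_le hc₀ hc
  set Q : ℝ := (c₁ / c₀) ^ 2 with hQdef
  have hQ : 0 < Q := by positivity
  have hrN : 2 < N * r := by
    rw [div_lt_iff₀ hr0] at hN; linarith
  set q : ℝ := (2 : ℝ) ^ (2 - N * r) with hqdef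
  have hq0 : 0 < q := Real.rpow_pos_of_pos two_pos _
  have hq1 : q < 1 := Real.rpow_lt_one_of_one_lt_of_neg one_lt_two (by linarith)
  set C₃ : ℝ := 64 * Q * (2 : ℝ) ^ (N * r) * (1 - q)⁻¹ with hC₃def
  have h2Nr : (0:ℝ) < (2 : ℝ) ^ (N * r) := Real.rpow_pos_of_pos two_pos _
  have hC₃ : 0 < C₃ := by
    apply mul_pos (by positivity)
    rw [inv_pos]; linarith
  refine ⟨C₃ ^ (1 / r), Real.rpow_pos_of_pos hC₃ _, ?_⟩
  intro g hg0 hgN t d₁ d₂ ht hd₁l hd₁u hd₂l hd₂u s hs0 hsfin x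
  have hd₁ : 0 < d₁ := lt_of_lt_of_le (by positivity) hd₁l
  have hd₂ : 0 < d₂ := lt_of_lt_of_le (by positivity) hd₂l
  set u : ℝ × ℝ → ℝ := fun y => ∑' n : ℕ × ℕ, Set.indicator (Uset d₁ d₂ n) (fun _ => s n) y
    with hudef
  set F : Finset (ℕ × ℕ) := hsfin.toFinset with hFdef
  have hsF : ∀ n, n ∉ F → s n = 0 := by
    intro n hn
    by_contra h
    exact hn (hsfin.mem_toFinset.2 h)
  set D : ℕ × ℕ → ℝ := fun n => Real.sqrt ((d₁ * x.1 - Real.pi * ((n.1 : ℝ) + 1 / 2)) ^ 2 +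
      (d₂ * x.2 - Real.pi * ((n.2 : ℝ) + 1 / 2)) ^ 2) with hDdef
  have hD0 : ∀ n, 0 ≤ D n := fun n => Real.sqrt_nonneg _
  have hu_eq : ∀ y, u y = ∑ n ∈ F, Set.indicator (Uset d₁ d₂ n) (fun _ => s n) y := by
    intro y
    exact tsum_eq_sum (fun n hn => by simp [Set.indicator_apply, hsF n hn])
  have hu_nonneg : ∀ y, 0 ≤ u y := by
    intro y
    rw [hu_eq y]
    exact Finset.sum_nonneg fun n _ => Set.indicator_nonneg (fun _ _ => hs0 n) y
  set S : ℝ := ∑ n ∈ F, s n with hSdef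
  have hS0 : 0 ≤ S := Finset.sum_nonneg fun n _ => hs0 n
  have hu_le : ∀ y, u y ≤ S := by
    intro y
    rw [hu_eq y, hSdef]
    apply Finset.sum_le_sum
    intro n _
    by_cases h : y ∈ Uset d₁ d₂ n
    · rw [Set.indicator_of_mem h]
    · rw [Set.indicator_of_notMem h]; exact hs0 n
  have hu_meas : Measurable u := by
    have : u = fun y => ∑ n ∈ F, Set.indicator (Uset d₁ d₂ n) (fun _ => s n) y :=
      funext hu_eq
    rw [this]
    exact Finset.measurable_sum F
      (fun n _ => measurable_const.indicator (measurableSet_Uset d₁ d₂ n))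
  have hur_meas : Measurable (fun y => |u y| ^ r) := by fun_prop
  -- the average associated to radius ρ
  set A : ℝ → ℝ := fun ρ =>
    ((volume (ball2 x ρ)).toReal)⁻¹ * ∫ y in ball2 x ρ, |u y| ^ r with hAdef
  have hA_nonneg : ∀ ρ, 0 ≤ A ρ := by
    intro ρ
    apply mul_nonneg (inv_nonneg.2 ENNReal.toReal_nonneg)
    exact integral_nonneg fun y => Real.rpow_nonneg (abs_nonneg _) r
  have hA_le : ∀ ρ : ℝ, A ρ ≤ S ^ r := by
    intro ρ
    set V : ℝ := (volume (ball2 x ρ)).toReal with hVdef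
    have hV0 : 0 ≤ V := ENNReal.toReal_nonneg
    have hint : ∫ y in ball2 x ρ, |u y| ^ r ≤ S ^ r * V := by
      have hb : ∀ y ∈ ball2 x ρ, ‖|u y| ^ r‖ ≤ S ^ r := by
        intro y _
        rw [Real.norm_eq_abs, abs_of_nonneg (Real.rpow_nonneg (abs_nonneg _) r)]
        apply Real.rpow_le_rpow (abs_nonneg _) _ hr0.le
        rw [abs_of_nonneg (hu_nonneg y)]
        exact hu_le y
      have := norm_setIntegral_le_of_norm_le_const (volume_ball2_lt_top x ρ) hb
      calc ∫ y in ball2 x ρ, |u y| ^ r ≤ ‖∫ y in ball2 x ρ, |u y| ^ r‖ := le_abs_self _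
        _ ≤ S ^ r * V := this
    rcases eq_or_lt_of_le hV0 with h | h
    · rw [hAdef]
      simp only [← hVdef, ← h, inv_zero, zero_mul]
      positivity
    · rw [hAdef]
      simp only [← hVdef]
      rw [inv_mul_le_iff₀ h, mul_comm (V) (S ^ r)]
      exact hint
  have hbdd : BddAbove (Set.range fun ρ : Set.Ioi (0:ℝ) => A ρ ^ (1 / r)) := by
    refine ⟨S, ?_⟩
    rintro _ ⟨ρ, rfl⟩
    calc A ρ ^ (1 / r) ≤ (S ^ r) ^ (1 / r) :=
          Real.rpow_le_rpow (hA_nonneg _) (hA_le _) (by positivity)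
      _ = S := by
          rw [← Real.rpow_mul hS0, mul_one_div_cancel hr0.ne', Real.rpow_one]
  have hMx_ge : ∀ ρ : ℝ, 0 < ρ → A ρ ^ (1 / r) ≤ maxFn r u x := by
    intro ρ hρ
    exact le_ciSup hbdd ⟨ρ, hρ⟩
  set Mx : ℝ := maxFn r u x with hMxdef
  have hMx0 : 0 ≤ Mx :=
    le_trans (Real.rpow_nonneg (hA_nonneg 1) _) (hMx_ge 1 one_pos)
  have hMxr : ∀ ρ : ℝ, 0 < ρ → A ρ ≤ Mx ^ r := by
    intro ρ hρ
    have h1 : A ρ = (A ρ ^ (1 / r)) ^ r := by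
      rw [← Real.rpow_mul (hA_nonneg ρ), one_div_mul_cancel hr0.ne', Real.rpow_one]
    rw [h1]
    exact Real.rpow_le_rpow (Real.rpow_nonneg (hA_nonneg ρ) _) (hMx_ge ρ hρ) hr0.le
  have hMxr0 : 0 ≤ Mx ^ r := Real.rpow_nonneg hMx0 r
  -- the key per-scale estimate
  have scale : ∀ K : ℝ, 1 ≤ K → ∀ G : Finset (ℕ × ℕ),
      (∀ n ∈ G, D n ≤ K) →
      ∑ n ∈ G, (s n) ^ r ≤ 64 * Q * K ^ 2 * Mx ^ r := by
    intro K hK G hGD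
    set ρ : ℝ := 2 * (K + 1) / (c₀ * t) with hρdef
    have hρ : 0 < ρ := by positivity
    have hsub : ∀ n ∈ G, Uset d₁ d₂ n ⊆ ball2 x ρ := fun n hn =>
      Uset_subset_ball2 hd₁ hd₂ hd₁l hd₂l (by positivity) (hGD n hn)
    -- pointwise bound
    have hpt : ∀ y ∈ ball2 x ρ,
        (∑ n ∈ G, Set.indicator (Uset d₁ d₂ n) (fun _ => (s n) ^ r) y) ≤ |u y| ^ r := by
      intro y _
      by_cases h : ∃ n₀ ∈ G, y ∈ Uset d₁ d₂ n₀
      · obtain ⟨n₀, hn₀G, hn₀y⟩ := h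
        have hsum : (∑ n ∈ G, Set.indicator (Uset d₁ d₂ n) (fun _ => (s n) ^ r) y)
            = (s n₀) ^ r := by
          rw [Finset.sum_eq_single_of_mem n₀ hn₀G]
          · rw [Set.indicator_of_mem hn₀y]
          · intro m hmG hmne
            rw [Set.indicator_of_notMem]
            intro hmy
            exact (Set.disjoint_left.1 (Uset_disjoint d₁ d₂ hmne)) hmy hn₀y
        rw [hsum]
        have huy : s n₀ ≤ u y := by
          by_cases hn₀F : n₀ ∈ F
          · rw [hu_eq y]
            calc s n₀ = Set.indicator (Uset d₁ d₂ n₀) (fun _ => s n₀) y := by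
                  rw [Set.indicator_of_mem hn₀y]
              _ ≤ _ := Finset.single_le_sum
                  (f := fun n => Set.indicator (Uset d₁ d₂ n) (fun _ => s n) y)
                  (fun n _ => Set.indicator_nonneg (fun _ _ => hs0 n) y) hn₀F
          · rw [hsF n₀ hn₀F]
            exact hu_nonneg y
        calc (s n₀) ^ r ≤ (u y) ^ r :=
              Real.rpow_le_rpow (hs0 n₀) huy hr0.le
          _ = |u y| ^ r := by rw [abs_of_nonneg (hu_nonneg y)]
      · push_neg at h
        have hz : (∑ n ∈ G, Set.indicator (Uset d₁ d₂ n) (fun _ => (s n) ^ r) y) = 0 := by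
          apply Finset.sum_eq_zero
          intro n hn
          exact Set.indicator_of_notMem (h n hn) _
        rw [hz]
        exact Real.rpow_nonneg (abs_nonneg _) r
    -- integrability
    have hint_ind : ∀ n ∈ G, IntegrableOn
        (fun y => Set.indicator (Uset d₁ d₂ n) (fun _ => (s n) ^ r) y) (ball2 x ρ) := by
      intro n _
      apply Integrable.indicator _ (measurableSet_Uset d₁ d₂ n)
      exact integrableOn_const (volume_ball2_lt_top x ρ).ne
    have hint_sum : IntegrableOn
        (fun y => ∑ n ∈ G, Set.indicator (Uset d₁ d₂ n) (fun _ => (s n) ^ r) y)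
        (ball2 x ρ) := integrable_finset_sum G hint_ind
    have hint_u : IntegrableOn (fun y => |u y| ^ r) (ball2 x ρ) := by
      apply Integrable.mono' (g := fun _ => S ^ r)
        (integrableOn_const (volume_ball2_lt_top x ρ).ne)
        hur_meas.aestronglyMeasurable.restrict
      apply ae_of_all
      intro y
      rw [Real.norm_eq_abs, abs_of_nonneg (Real.rpow_nonneg (abs_nonneg _) r)]
      apply Real.rpow_le_rpow (abs_nonneg _) _ hr0.le
      rw [abs_of_nonneg (hu_nonneg y)]
      exact hu_le y
    -- the integral identity
    have hint_eq : ∫ y in ball2 x ρ,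
        (∑ n ∈ G, Set.indicator (Uset d₁ d₂ n) (fun _ => (s n) ^ r) y)
        = ∑ n ∈ G, (s n) ^ r * (volume (Uset d₁ d₂ n)).toReal := by
      rw [integral_finset_sum G hint_ind]
      apply Finset.sum_congr rfl
      intro n hn
      rw [setIntegral_indicator (measurableSet_Uset d₁ d₂ n),
        Set.inter_eq_self_of_subset_right (hsub n hn), setIntegral_const, smul_eq_mul,
        mul_comm]
      rfl
    have hle_int : ∑ n ∈ G, (s n) ^ r * (volume (Uset d₁ d₂ n)).toReal
        ≤ ∫ y in ball2 x ρ, |u y| ^ r := by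
      rw [← hint_eq]
      exact setIntegral_mono_on hint_sum hint_u (measurableSet_ball2 x ρ) hpt
    -- volume bounds
    set V : ℝ := (volume (ball2 x ρ)).toReal with hVdef
    have hV : 0 < V := volume_ball2_pos x ρ hρ
    have hVle : V ≤ 4 * ρ ^ 2 := volume_ball2_toReal_le x ρ hρ
    have hsum_low : (1 / (c₁ * t) ^ 2) * ∑ n ∈ G, (s n) ^ r
        ≤ ∑ n ∈ G, (s n) ^ r * (volume (Uset d₁ d₂ n)).toReal := by
      rw [Finset.mul_sum]
      apply Finset.sum_le_sum
      intro n _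
      rw [mul_comm]
      apply mul_le_mul_of_nonneg_left _ (Real.rpow_nonneg (hs0 n) r)
      calc 1 / (c₁ * t) ^ 2 ≤ 1 / (d₁ * d₂) := by
            apply div_le_div_of_nonneg_left one_pos.le (by positivity)
            calc d₁ * d₂ ≤ (c₁ * t) * (c₁ * t) := by
                  apply mul_le_mul hd₁u hd₂u hd₂.le (by positivity)
              _ = (c₁ * t) ^ 2 := by ring
        _ ≤ (volume (Uset d₁ d₂ n)).toReal := volume_Uset_toReal_ge hd₁ hd₂ n
    have hAρ : A ρ ≤ Mx ^ r := hMxr ρ hρ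
    have hIVA : ∫ y in ball2 x ρ, |u y| ^ r = V * A ρ := by
      rw [hAdef]
      simp only [← hVdef]
      rw [← mul_assoc, mul_inv_cancel₀ hV.ne', one_mul]
    -- combine
    have hchain : (1 / (c₁ * t) ^ 2) * ∑ n ∈ G, (s n) ^ r ≤ 4 * ρ ^ 2 * Mx ^ r := by
      calc (1 / (c₁ * t) ^ 2) * ∑ n ∈ G, (s n) ^ r
          ≤ ∫ y in ball2 x ρ, |u y| ^ r := le_trans hsum_low hle_int
        _ = V * A ρ := hIVA
        _ ≤ (4 * ρ ^ 2) * Mx ^ r := by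
            apply mul_le_mul hVle hAρ (hA_nonneg ρ) (by positivity)
    have hct0 : (c₀ * t) ≠ 0 := (by positivity : (0:ℝ) < c₀ * t).ne'
    have hfinal : (c₁ * t) ^ 2 * (4 * ρ ^ 2) ≤ 64 * Q * K ^ 2 := by
      have hQ' : (c₁ * t) ^ 2 / (c₀ * t) ^ 2 = Q := by
        rw [hQdef]
        field_simp
      have e1 : (c₁ * t) ^ 2 * (4 * ρ ^ 2) = 16 * (K + 1) ^ 2 * ((c₁ * t) ^ 2 / (c₀ * t) ^ 2) := by
        rw [hρdef]
        field_simp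
        ring
      rw [e1, hQ']
      have h1 : (K + 1) ^ 2 ≤ 4 * K ^ 2 := by nlinarith [hK]
      have h2 := mul_le_mul_of_nonneg_right h1 hQ.le
      linarith
    -- finish
    have hct2 : (0:ℝ) < (c₁ * t) ^ 2 := by positivity
    have := mul_le_mul_of_nonneg_left hchain hct2.le
    rw [← mul_assoc, mul_one_div, div_self hct2.ne', one_mul] at this
    calc ∑ n ∈ G, (s n) ^ r ≤ (c₁ * t) ^ 2 * (4 * ρ ^ 2 * Mx ^ r) := this
      _ = (c₁ * t) ^ 2 * (4 * ρ ^ 2) * Mx ^ r := by ring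
      _ ≤ 64 * Q * K ^ 2 * Mx ^ r := by
          apply mul_le_mul_of_nonneg_right hfinal hMxr0
    -- final assembly
  have hLHS_eq : (∑' n : ℕ × ℕ, s n *
      g (d₁ * x.1 - Real.pi * ((n.1 : ℝ) + 1 / 2),
         d₂ * x.2 - Real.pi * ((n.2 : ℝ) + 1 / 2)))
      = ∑ n ∈ F, s n * g (d₁ * x.1 - Real.pi * ((n.1 : ℝ) + 1 / 2),
         d₂ * x.2 - Real.pi * ((n.2 : ℝ) + 1 / 2)) :=
    tsum_eq_sum (fun n hn => by rw [hsF n hn, zero_mul])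
  rw [hLHS_eq]
  set a : ℕ × ℕ → ℝ := fun n => s n * g (d₁ * x.1 - Real.pi * ((n.1 : ℝ) + 1 / 2),
         d₂ * x.2 - Real.pi * ((n.2 : ℝ) + 1 / 2)) with hadef
  have ha0 : ∀ n, 0 ≤ a n := fun n => mul_nonneg (hs0 n) (hg0 _)
  have h_ar : ∀ n, a n ^ r ≤ s n ^ r * (1 + D n) ^ (-(N * r)) := by
    intro n
    have h1D : (0:ℝ) ≤ 1 + D n := by linarith [hD0 n]
    have hgz : g (d₁ * x.1 - Real.pi * ((n.1 : ℝ) + 1 / 2),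
        d₂ * x.2 - Real.pi * ((n.2 : ℝ) + 1 / 2)) ≤ (1 + D n) ^ (-N) := by
      have h := hgN (d₁ * x.1 - Real.pi * ((n.1 : ℝ) + 1 / 2),
        d₂ * x.2 - Real.pi * ((n.2 : ℝ) + 1 / 2))
      rw [hDdef]
      exact h
    calc a n ^ r = s n ^ r * g (d₁ * x.1 - Real.pi * ((n.1 : ℝ) + 1 / 2),
          d₂ * x.2 - Real.pi * ((n.2 : ℝ) + 1 / 2)) ^ r := by
          rw [hadef]; exact Real.mul_rpow (hs0 n) (hg0 _)
      _ ≤ s n ^ r * ((1 + D n) ^ (-N)) ^ r := by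
          apply mul_le_mul_of_nonneg_left _ (Real.rpow_nonneg (hs0 n) r)
          exact Real.rpow_le_rpow (hg0 _) hgz hr0.le
      _ = s n ^ r * (1 + D n) ^ (-(N * r)) := by
          rw [← Real.rpow_mul h1D, neg_mul]
  -- dyadic decomposition
  obtain ⟨B, hB⟩ := (F.image D).exists_le
  obtain ⟨K₀, hK₀⟩ := pow_unbounded_of_one_lt B one_lt_two
  have hDF : ∀ n ∈ F, D n ≤ (2:ℝ) ^ K₀ := fun n hn =>
    le_trans (hB _ (Finset.mem_image_of_mem D hn)) hK₀.le
  set Fk : ℕ → Finset (ℕ × ℕ) := fun k =>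
    F.filter (fun n => D n ≤ (2:ℝ) ^ k ∧ ∀ j < k, ¬(D n ≤ (2:ℝ) ^ j)) with hFkdef
  have hFk_union : F = (Finset.range (K₀ + 1)).biUnion Fk := by
    ext n
    constructor
    · intro hn
      have hex : ∃ k, D n ≤ (2:ℝ) ^ k := ⟨K₀, hDF n hn⟩
      refine Finset.mem_biUnion.2 ⟨Nat.find hex, ?_, ?_⟩
      · exact Finset.mem_range.2 (Nat.lt_succ_of_le (Nat.find_le (hDF n hn)))
      · simp only [hFkdef, Finset.mem_filter]
        exact ⟨hn, Nat.find_spec hex, fun j hj => Nat.find_min hex hj⟩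
    · intro hn
      obtain ⟨k, -, hk⟩ := Finset.mem_biUnion.1 hn
      simp only [hFkdef, Finset.mem_filter] at hk
      exact hk.1
  have hFk_disj : Set.PairwiseDisjoint ↑(Finset.range (K₀ + 1)) Fk := by
    intro k _ l _ hkl
    rw [Function.onFun, Finset.disjoint_left]
    intro n hnk hnl
    simp only [hFkdef, Finset.mem_filter] at hnk hnl
    rcases lt_or_gt_of_ne hkl with h | h
    · exact (hnl.2.2 k h) hnk.2.1
    · exact (hnk.2.2 l h) hnl.2.1
  have decomp : ∑ n ∈ F, s n ^ r * (1 + D n) ^ (-(N * r))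
      = ∑ k ∈ Finset.range (K₀ + 1), ∑ n ∈ Fk k, s n ^ r * (1 + D n) ^ (-(N * r)) := by
    conv_lhs => rw [hFk_union]
    exact Finset.sum_biUnion hFk_disj
  -- per-annulus bound
  have hkbound : ∀ k : ℕ, ∑ n ∈ Fk k, s n ^ r * (1 + D n) ^ (-(N * r))
      ≤ 64 * Q * 2 ^ (N * r) * Mx ^ r * q ^ k := by
    intro k
    have hEk : (0:ℝ) < (2:ℝ) ^ k := by positivity
    have hK2 : (1:ℝ) ≤ (2:ℝ) ^ k := one_le_pow₀ one_le_two
    have hhalf : ∀ n ∈ Fk k, (2:ℝ) ^ k / 2 ≤ 1 + D n := by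
      intro n hn
      simp only [hFkdef, Finset.mem_filter] at hn
      obtain ⟨-, h1, h2⟩ := hn
      cases k with
      | zero => norm_num; linarith [hD0 n]
      | succ j =>
        have hj := h2 j (Nat.lt_succ_self j)
        push_neg at hj
        have h2j : (2:ℝ) ^ (j+1) / 2 = 2 ^ j := by rw [pow_succ]; ring
        rw [h2j]
        linarith [hj]
    have hterm : ∀ n ∈ Fk k, s n ^ r * (1 + D n) ^ (-(N * r))
        ≤ s n ^ r * ((2:ℝ) ^ k / 2) ^ (-(N * r)) := by
      intro n hn
      apply mul_le_mul_of_nonneg_left _ (Real.rpow_nonneg (hs0 n) r)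
      exact Real.rpow_le_rpow_of_nonpos (by positivity) (hhalf n hn) (by linarith)
    have hsum1 : ∑ n ∈ Fk k, s n ^ r * (1 + D n) ^ (-(N * r))
        ≤ ((2:ℝ) ^ k / 2) ^ (-(N * r)) * ∑ n ∈ Fk k, s n ^ r := by
      calc ∑ n ∈ Fk k, s n ^ r * (1 + D n) ^ (-(N * r))
          ≤ ∑ n ∈ Fk k, s n ^ r * ((2:ℝ) ^ k / 2) ^ (-(N * r)) := Finset.sum_le_sum hterm
        _ = _ := by rw [← Finset.sum_mul, mul_comm]
    have hscale := scale ((2:ℝ) ^ k) hK2 (Fk k) (fun n hn => by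
      simp only [hFkdef, Finset.mem_filter] at hn
      exact hn.2.1)
    have hc2 : (0:ℝ) ≤ ((2:ℝ) ^ k / 2) ^ (-(N * r)) := Real.rpow_nonneg (by positivity) _
    have halg : ((2:ℝ) ^ k / 2) ^ (-(N * r)) * (64 * Q * ((2:ℝ) ^ k) ^ 2 * Mx ^ r)
        = 64 * Q * 2 ^ (N * r) * Mx ^ r * q ^ k := by
      have e0 : (2:ℝ) ^ ((k:ℝ) - 1) = (2:ℝ) ^ k / 2 := by
        rw [Real.rpow_sub two_pos, Real.rpow_one, Real.rpow_natCast]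
      have e1 : ((2:ℝ) ^ k / 2) ^ (-(N * r)) = (2:ℝ) ^ (((k:ℝ) - 1) * (-(N * r))) := by
        rw [← e0, ← Real.rpow_mul (by norm_num : (0:ℝ) ≤ 2)]
      have e2 : ((2:ℝ) ^ k) ^ 2 = (2:ℝ) ^ ((k:ℝ) * 2) := by
        rw [← Real.rpow_natCast (2:ℝ) k, ← Real.rpow_natCast ((2:ℝ) ^ ((k:ℝ))) 2,
          ← Real.rpow_mul (by norm_num : (0:ℝ) ≤ 2)]
        norm_num
      have e3 : q ^ k = (2:ℝ) ^ ((2 - N * r) * (k:ℝ)) := by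
        rw [hqdef, ← Real.rpow_natCast ((2:ℝ) ^ (2 - N * r)) k,
          ← Real.rpow_mul (by norm_num : (0:ℝ) ≤ 2)]
      rw [e1, e2, e3]
      have h12 : (2:ℝ) ^ (((k:ℝ) - 1) * (-(N * r))) * (2:ℝ) ^ ((k:ℝ) * 2)
          = (2:ℝ) ^ (((k:ℝ) - 1) * (-(N * r)) + (k:ℝ) * 2) := (Real.rpow_add two_pos _ _).symm
      have h34 : (2:ℝ) ^ (N * r) * (2:ℝ) ^ ((2 - N * r) * (k:ℝ))
          = (2:ℝ) ^ (N * r + (2 - N * r) * (k:ℝ)) := (Real.rpow_add two_pos _ _).symm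
      have hexp : ((k:ℝ) - 1) * (-(N * r)) + (k:ℝ) * 2 = N * r + (2 - N * r) * (k:ℝ) := by
        ring
      calc ((2:ℝ) ^ (((k:ℝ) - 1) * (-(N * r)))) * (64 * Q * (2:ℝ) ^ ((k:ℝ) * 2) * Mx ^ r)
          = 64 * Q * Mx ^ r * ((2:ℝ) ^ (((k:ℝ) - 1) * (-(N * r))) * (2:ℝ) ^ ((k:ℝ) * 2)) := by
            ring
        _ = 64 * Q * Mx ^ r * (2:ℝ) ^ (((k:ℝ) - 1) * (-(N * r)) + (k:ℝ) * 2) := by rw [h12]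
        _ = 64 * Q * Mx ^ r * (2:ℝ) ^ (N * r + (2 - N * r) * (k:ℝ)) := by rw [hexp]
        _ = 64 * Q * Mx ^ r * ((2:ℝ) ^ (N * r) * (2:ℝ) ^ ((2 - N * r) * (k:ℝ))) := by rw [h34]
        _ = _ := by ring
    calc ∑ n ∈ Fk k, s n ^ r * (1 + D n) ^ (-(N * r))
        ≤ ((2:ℝ) ^ k / 2) ^ (-(N * r)) * ∑ n ∈ Fk k, s n ^ r := hsum1
      _ ≤ ((2:ℝ) ^ k / 2) ^ (-(N * r)) * (64 * Q * ((2:ℝ) ^ k) ^ 2 * Mx ^ r) :=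
          mul_le_mul_of_nonneg_left hscale hc2
      _ = _ := halg
  have hsum_geom : ∑ k ∈ Finset.range (K₀ + 1), q ^ k ≤ (1 - q)⁻¹ :=
    (Summable.sum_le_tsum _ (fun i _ => by positivity)
      (summable_geometric_of_lt_one hq0.le hq1)).trans_eq (tsum_geometric_of_lt_one hq0.le hq1)
  have hpos4 : (0:ℝ) ≤ 64 * Q * 2 ^ (N * r) * Mx ^ r := by
    apply mul_nonneg _ hMxr0
    positivity
  have hT : ∑ n ∈ F, s n ^ r * (1 + D n) ^ (-(N * r)) ≤ C₃ * Mx ^ r := by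
    rw [decomp]
    calc ∑ k ∈ Finset.range (K₀ + 1), ∑ n ∈ Fk k, s n ^ r * (1 + D n) ^ (-(N * r))
        ≤ ∑ k ∈ Finset.range (K₀ + 1), 64 * Q * 2 ^ (N * r) * Mx ^ r * q ^ k :=
          Finset.sum_le_sum (fun k _ => hkbound k)
      _ = 64 * Q * 2 ^ (N * r) * Mx ^ r * ∑ k ∈ Finset.range (K₀ + 1), q ^ k := by
          rw [← Finset.mul_sum]
      _ ≤ 64 * Q * 2 ^ (N * r) * Mx ^ r * (1 - q)⁻¹ :=
          mul_le_mul_of_nonneg_left hsum_geom hpos4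
      _ = C₃ * Mx ^ r := by rw [hC₃def]; ring
  have hsumsa : 0 ≤ ∑ n ∈ F, a n := Finset.sum_nonneg fun n _ => ha0 n
  have hstep1 : ∑ n ∈ F, a n ≤ (∑ n ∈ F, a n ^ r) ^ (1 / r) := by
    have h1 := sum_rpow_ge F a r hr0 hr1 (fun n _ => ha0 n)
    have h2 : ((∑ n ∈ F, a n) ^ r) ^ (1 / r) = ∑ n ∈ F, a n := by
      rw [← Real.rpow_mul hsumsa, mul_one_div_cancel hr0.ne', Real.rpow_one]
    calc ∑ n ∈ F, a n = ((∑ n ∈ F, a n) ^ r) ^ (1 / r) := h2.symm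
      _ ≤ (∑ n ∈ F, a n ^ r) ^ (1 / r) :=
          Real.rpow_le_rpow (Real.rpow_nonneg hsumsa r) h1 (by positivity)
  have hstep2 : ∑ n ∈ F, a n ^ r ≤ C₃ * Mx ^ r :=
    le_trans (Finset.sum_le_sum fun n _ => h_ar n) hT
  have har_nonneg : 0 ≤ ∑ n ∈ F, a n ^ r :=
    Finset.sum_nonneg fun n _ => Real.rpow_nonneg (ha0 n) r
  calc ∑ n ∈ F, a n ≤ (∑ n ∈ F, a n ^ r) ^ (1 / r) := hstep1
    _ ≤ (C₃ * Mx ^ r) ^ (1 / r) := Real.rpow_le_rpow har_nonneg hstep2 (by positivity)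
    _ = C₃ ^ (1 / r) * Mx := by
        rw [Real.mul_rpow hC₃.le hMxr0, ← Real.rpow_mul hMx0, mul_one_div_cancel hr0.ne',
          Real.rpow_one]
end
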